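/- Completeness: for every W-logic WL among the fourteen systems and every formula A, if A is valid in every constructive neighbourhood model for WL, then WL ⊢ A. -/
import Mathlib


set_option autoImplicit false

/-- Formulas of the propositional modal language:
`A ::= p | ⊥ | A∧A | A∨A | A→A | □A | ◇A`. -/
inductive Formula : Type
  | var : ℕ → Formula
  | bot : Formula
  | and : Formula → Formula → Formula
  | or : Formula → Formula → Formula
  | imp : Formula → Formula → Formula
  | box : Formula → Formula
  | dia : Formula → Formula
  deriving DecidableEq

/-- `¬A := A → ⊥`. -/
def Formula.neg (A : Formula) : Formula := A.imp Formula.bot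

/-- `⊤ := ⊥ → ⊥`. -/
def Formula.top : Formula := Formula.bot.imp Formula.bot

/-- A specification of which additional modal axioms a logic has:
`N` (□⊤ / N-condition), `C` (C_□ together with K_◇ in W-logics),
`P` (P_□ classically / P_◇ in W-logics), `D` (□A→◇A), `T` (T_□, and T_◇ in W-logics). -/
structure LogicSpec where
  hasN : Bool := false
  hasC : Bool := false
  hasP : Bool := false
  hasD : Bool := false
  hasT : Bool := false

/-- The names of the fourteen systems. -/
inductive LName : Type
  | M | MN | MC | K | MP | MNP | MD | MND | MCD | KD | MT | MNT | MCT | KT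

/-- The axiom flags of the fourteen classical modal logics. -/
def cSpec : LName → LogicSpec
  | .M   => {}
  | .MN  => { hasN := true }
  | .MC  => { hasC := true }
  | .K   => { hasN := true, hasC := true }
  | .MP  => { hasP := true }
  | .MNP => { hasN := true, hasP := true }
  | .MD  => { hasD := true }
  | .MND => { hasN := true, hasD := true }
  | .MCD => { hasC := true, hasD := true }
  | .KD  => { hasN := true, hasC := true, hasD := true }
  | .MT  => { hasT := true }
  | .MNT => { hasN := true, hasT := true }
  | .MCT => { hasC := true, hasT := true }
  | .KT  => { hasN := true, hasC := true, hasT := true }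

/-- The axiom flags of the fourteen W-logics (WMD and WMCD include the axiom P_◇ explicitly). -/
def wSpec : LName → LogicSpec
  | .MD  => { hasP := true, hasD := true }
  | .MCD => { hasC := true, hasP := true, hasD := true }
  | n    => cSpec n

/-- Hilbert-style provability in the W-logic determined by the flags `S`:
intuitionistic propositional logic plus dual∧, the monotonicity rules M_□ and M_◇,
and, according to the flags, N_□, C_□ together with K_◇, P_◇, D, T_□ together with T_◇. -/
inductive WProof (S : LogicSpec) : Formula → Prop
  | ax1 (A B : Formula) : WProof S (A.imp (B.imp A))
  | ax2 (A B C : Formula) : WProof S ((A.imp (B.imp C)).imp ((A.imp B).imp (A.imp C)))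
  | andI (A B : Formula) : WProof S (A.imp (B.imp (A.and B)))
  | andE1 (A B : Formula) : WProof S ((A.and B).imp A)
  | andE2 (A B : Formula) : WProof S ((A.and B).imp B)
  | orI1 (A B : Formula) : WProof S (A.imp (A.or B))
  | orI2 (A B : Formula) : WProof S (B.imp (A.or B))
  | orE (A B C : Formula) : WProof S ((A.imp C).imp ((B.imp C).imp ((A.or B).imp C)))
  | botE (A : Formula) : WProof S (Formula.bot.imp A)
  | mp {A B : Formula} : WProof S (A.imp B) → WProof S A → WProof S B
  | dualAnd (A : Formula) : WProof S (((Formula.box A).and (Formula.dia A.neg)).neg)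
  | monBox {A B : Formula} : WProof S (A.imp B) → WProof S ((Formula.box A).imp (Formula.box B))
  | monDia {A B : Formula} : WProof S (A.imp B) → WProof S ((Formula.dia A).imp (Formula.dia B))
  | nBox : S.hasN = true → WProof S (Formula.box Formula.top)
  | cBox (A B : Formula) : S.hasC = true →
      WProof S (((Formula.box A).and (Formula.box B)).imp (Formula.box (A.and B)))
  | kDia (A B : Formula) : S.hasC = true →
      WProof S ((Formula.box (A.imp B)).imp ((Formula.dia A).imp (Formula.dia B)))
  | pDia : S.hasP = true → WProof S (Formula.dia Formula.top)
  | dAx (A : Formula) : S.hasD = true → WProof S ((Formula.box A).imp (Formula.dia A))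
  | tBox (A : Formula) : S.hasT = true → WProof S ((Formula.box A).imp A)
  | tDia (A : Formula) : S.hasT = true → WProof S (A.imp (Formula.dia A))

/-- A constructive neighbourhood model (CNM): a preorder `le` of intuitionistic
accessibility, a neighbourhood function `N`, and a hereditary valuation `V`. -/
structure CNM (W : Type) where
  le : W → W → Prop
  le_refl : ∀ w, le w w
  le_trans : ∀ u v w, le u v → le v w → le u w
  N : W → Set (Set W)
  V : ℕ → Set W
  hered : ∀ (p : ℕ) (u v : W), le u v → u ∈ V p → v ∈ V p

/-- Forcing in a constructive neighbourhood model: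
`w ⊩ B→C` iff for all `v ≥ w`, `v ⊩ B` implies `v ⊩ C`;
`w ⊩ □B` iff for all `v ≥ w` there is `α ∈ N(v)` with `u ⊩ B` for all `u ∈ α`;
`w ⊩ ◇B` iff for all `v ≥ w` and all `α ∈ N(v)` there is `u ∈ α` with `u ⊩ B`. -/
def CNM.force {W : Type} (M : CNM W) : Formula → W → Prop
  | Formula.var p, w => w ∈ M.V p
  | Formula.bot, _ => False
  | Formula.and A B, w => M.force A w ∧ M.force B w
  | Formula.or A B, w => M.force A w ∨ M.force B w
  | Formula.imp A B, w => ∀ v, M.le w v → M.force A v → M.force B v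
  | Formula.box A, w => ∀ v, M.le w v → ∃ α ∈ M.N v, ∀ u ∈ α, M.force A u
  | Formula.dia A, w => ∀ v, M.le w v → ∀ α ∈ M.N v, ∃ u ∈ α, M.force A u

/-- `M` is a constructive neighbourhood model for the W-logic with flags `S`: it
satisfies the condition (C), (N), (T), (D), (P) corresponding to each modal axiom
of the logic among C_□ (with K_◇), N_□, T_□ (with T_◇), D, P_◇. -/
def CNM.forLogic {W : Type} (S : LogicSpec) (M : CNM W) : Prop :=
  (S.hasC = true → ∀ w, ∀ α ∈ M.N w, ∀ β ∈ M.N w, α ∩ β ∈ M.N w) ∧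
  (S.hasN = true → ∀ w, M.N w ≠ ∅) ∧
  (S.hasT = true → ∀ w, ∀ α ∈ M.N w, w ∈ α) ∧
  (S.hasD = true → ∀ w, ∀ α ∈ M.N w, ∀ β ∈ M.N w, (α ∩ β).Nonempty) ∧
  (S.hasP = true → ∀ w, ∅ ∉ M.N w)
/-! ### Auxiliary machinery for the completeness proof -/

section Completeness

open Formula

/-! #### Propositional combinators -/

namespace WProof

variable {S : LogicSpec}

theorem impId (A : Formula) : WProof S (A.imp A) :=
  mp (mp (ax2 A (A.imp A) A) (ax1 A (A.imp A))) (ax1 A A)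

theorem impK {A : Formula} (B : Formula) (h : WProof S A) : WProof S (B.imp A) :=
  mp (ax1 A B) h

theorem comp {A B C : Formula} (h1 : WProof S (A.imp B)) (h2 : WProof S (B.imp C)) :
    WProof S (A.imp C) :=
  mp (mp (ax2 A B C) (impK A h2)) h1

theorem pairR {X A B : Formula} (h1 : WProof S (X.imp A)) (h2 : WProof S (X.imp B)) :
    WProof S (X.imp (A.and B)) :=
  mp (mp (ax2 X B (A.and B)) (comp h1 (andI A B))) h2

theorem curry {A B C : Formula} (h : WProof S ((A.and B).imp C)) :
    WProof S (A.imp (B.imp C)) :=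
  comp (andI A B) (mp (ax2 B (A.and B) C) (impK B h))

theorem uncurry {A B C : Formula} (h : WProof S (A.imp (B.imp C))) :
    WProof S ((A.and B).imp C) :=
  mp (mp (ax2 (A.and B) B C) (comp (andE1 A B) h)) (andE2 A B)

theorem andComm (A B : Formula) : WProof S ((A.and B).imp (B.and A)) :=
  pairR (andE2 A B) (andE1 A B)

theorem flipImp {A B C : Formula} (h : WProof S (A.imp (B.imp C))) :
    WProof S (B.imp (A.imp C)) :=
  curry (comp (andComm B A) (uncurry h))

theorem dni (A : Formula) : WProof S (A.imp A.neg.neg) :=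
  flipImp (impId A.neg)

theorem orElim {A B C : Formula} (h1 : WProof S (A.imp C)) (h2 : WProof S (B.imp C)) :
    WProof S ((A.or B).imp C) :=
  mp (mp (orE A B C) h1) h2

theorem strengthen {D D' B X : Formula} (hdd : WProof S (D'.imp D))
    (h : WProof S ((D.and B).imp X)) : WProof S ((D'.and B).imp X) :=
  comp (pairR (comp (andE1 D' B) hdd) (andE2 D' B)) h

theorem orFactor {D B C X : Formula} (h1 : WProof S ((D.and B).imp X))
    (h2 : WProof S ((D.and C).imp X)) : WProof S ((D.and (B.or C)).imp X) :=
  comp (andComm D (B.or C))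
    (uncurry (orElim (curry (comp (andComm B D) h1)) (curry (comp (andComm C D) h2))))

theorem mpChain (B C : Formula) : WProof S ((B.and (B.imp C)).imp C) :=
  comp (andComm B (B.imp C)) (uncurry (impId (B.imp C)))

end WProof

/-! #### Theories and prime theories -/

def IsTheory (S : LogicSpec) (Γ : Set Formula) : Prop :=
  (∀ B, WProof S B → B ∈ Γ) ∧ (∀ B C, B ∈ Γ → WProof S (B.imp C) → C ∈ Γ) ∧
  (∀ B C, B ∈ Γ → C ∈ Γ → B.and C ∈ Γ)

def IsPrime (S : LogicSpec) (Γ : Set Formula) : Prop :=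
  IsTheory S Γ ∧ Formula.bot ∉ Γ ∧ ∀ B C, B.or C ∈ Γ → B ∈ Γ ∨ C ∈ Γ

namespace IsTheory

variable {S : LogicSpec} {Γ : Set Formula}

theorem mem_thm (h : IsTheory S Γ) {B : Formula} (hB : WProof S B) : B ∈ Γ := h.1 B hB

theorem mem_mono (h : IsTheory S Γ) {B C : Formula} (hB : B ∈ Γ)
    (hd : WProof S (B.imp C)) : C ∈ Γ := h.2.1 B C hB hd

theorem mem_conj (h : IsTheory S Γ) {B C : Formula} (hB : B ∈ Γ) (hC : C ∈ Γ) :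
    B.and C ∈ Γ := h.2.2 B C hB hC

theorem mem_top (h : IsTheory S Γ) : Formula.top ∈ Γ := h.mem_thm (WProof.impId Formula.bot)

theorem mem_mp (h : IsTheory S Γ) {B C : Formula} (hB : B ∈ Γ) (hBC : B.imp C ∈ Γ) : C ∈ Γ :=
  h.mem_mono (h.mem_conj hB hBC) (WProof.mpChain B C)

end IsTheory

/-- The theory generated by a theory `Δ` together with one extra formula `B`. -/
def extTh (S : LogicSpec) (Δ : Set Formula) (B : Formula) : Set Formula :=
  {E | ∃ d ∈ Δ, WProof S ((d.and B).imp E)}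

theorem extTh_theory {S : LogicSpec} {Δ : Set Formula} (hΔ : IsTheory S Δ) (B : Formula) :
    IsTheory S (extTh S Δ B) := by
  refine ⟨fun E hE => ⟨Formula.top, hΔ.mem_top, WProof.impK _ hE⟩,
    fun E F ⟨d, hd, hder⟩ h => ⟨d, hd, hder.comp h⟩,
    fun E F ⟨d1, hd1, h1⟩ ⟨d2, hd2, h2⟩ => ⟨d1.and d2, hΔ.mem_conj hd1 hd2, ?_⟩⟩
  exact WProof.pairR (WProof.strengthen (WProof.andE1 d1 d2) h1)
    (WProof.strengthen (WProof.andE2 d1 d2) h2)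

theorem subset_extTh {S : LogicSpec} {Δ : Set Formula} (B : Formula) : Δ ⊆ extTh S Δ B :=
  fun d hd => ⟨d, hd, WProof.andE1 d B⟩

theorem self_mem_extTh {S : LogicSpec} {Δ : Set Formula} (hΔ : IsTheory S Δ) (B : Formula) :
    B ∈ extTh S Δ B :=
  ⟨Formula.top, hΔ.mem_top, WProof.andE2 Formula.top B⟩

/-! #### Lindenbaum lemma -/

theorem lindenbaum {S : LogicSpec} {Γ : Set Formula} (hΓ : IsTheory S Γ) {X : Formula}
    (hX : X ∉ Γ) : ∃ Δ, IsPrime S Δ ∧ Γ ⊆ Δ ∧ X ∉ Δ := by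
  classical
  set 𝒮 : Set (Set Formula) := {Δ | IsTheory S Δ ∧ Γ ⊆ Δ ∧ X ∉ Δ} with h𝒮
  have hub : ∀ c ⊆ 𝒮, IsChain (· ⊆ ·) c → c.Nonempty → ∃ ub ∈ 𝒮, ∀ s ∈ c, s ⊆ ub := by
    intro c hc hchain hne
    obtain ⟨t0, ht0⟩ := hne
    refine ⟨⋃₀ c, ⟨⟨fun B hB => Set.mem_sUnion.2 ⟨t0, ht0, (hc ht0).1.mem_thm hB⟩,
      fun B C hB hd => ?_, fun B C hB hC => ?_⟩, fun x hx => Set.mem_sUnion.2 ⟨t0, ht0, (hc ht0).2.1 hx⟩, ?_⟩,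
      fun s hs x hx => Set.mem_sUnion.2 ⟨s, hs, hx⟩⟩
    · obtain ⟨t, ht, hBt⟩ := Set.mem_sUnion.1 hB
      exact Set.mem_sUnion.2 ⟨t, ht, (hc ht).1.mem_mono hBt hd⟩
    · obtain ⟨t1, ht1, hB1⟩ := Set.mem_sUnion.1 hB
      obtain ⟨t2, ht2, hC2⟩ := Set.mem_sUnion.1 hC
      rcases eq_or_ne t1 t2 with rfl | hne12
      · exact Set.mem_sUnion.2 ⟨t1, ht1, (hc ht1).1.mem_conj hB1 hC2⟩
      · rcases hchain ht1 ht2 hne12 with h12 | h21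
        · exact Set.mem_sUnion.2 ⟨t2, ht2, (hc ht2).1.mem_conj (h12 hB1) hC2⟩
        · exact Set.mem_sUnion.2 ⟨t1, ht1, (hc ht1).1.mem_conj hB1 (h21 hC2)⟩
    · intro hXin
      obtain ⟨t, ht, hXt⟩ := Set.mem_sUnion.1 hXin
      exact (hc ht).2.2 hXt
  obtain ⟨Δ, hsub, hmax⟩ := zorn_subset_nonempty 𝒮 hub Γ ⟨hΓ, subset_rfl, hX⟩
  obtain ⟨hΔth, hΔΓ, hΔX⟩ : IsTheory S Δ ∧ Γ ⊆ Δ ∧ X ∉ Δ := hmax.1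
  have hbot : Formula.bot ∉ Δ := fun hb => hΔX (hΔth.mem_mono hb (WProof.botE X))
  refine ⟨Δ, ⟨hΔth, hbot, ?_⟩, hΔΓ, hΔX⟩
  intro B C hBC
  by_contra hnot
  push_neg at hnot
  obtain ⟨hB, hC⟩ := hnot
  -- both extensions must prove X
  have hXB : X ∈ extTh S Δ B := by
    by_contra hXB
    have hmem : extTh S Δ B ∈ 𝒮 :=
      ⟨extTh_theory hΔth B, hΔΓ.trans (subset_extTh B), hXB⟩
    have : extTh S Δ B ⊆ Δ := hmax.2 hmem (subset_extTh B)
    exact hB (this (self_mem_extTh hΔth B))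
  have hXC : X ∈ extTh S Δ C := by
    by_contra hXC
    have hmem : extTh S Δ C ∈ 𝒮 :=
      ⟨extTh_theory hΔth C, hΔΓ.trans (subset_extTh C), hXC⟩
    have : extTh S Δ C ⊆ Δ := hmax.2 hmem (subset_extTh C)
    exact hC (this (self_mem_extTh hΔth C))
  obtain ⟨d1, hd1, h1⟩ := hXB
  obtain ⟨d2, hd2, h2⟩ := hXC
  have h1' := WProof.strengthen (WProof.andE1 d1 d2) h1
  have h2' := WProof.strengthen (WProof.andE2 d1 d2) h2
  have hor := WProof.orFactor h1' h2'
  exact hΔX (hΔth.mem_mono (hΔth.mem_conj (hΔth.mem_conj hd1 hd2) hBC) hor)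

/-! #### Prime theory existence lemmas -/

def genTh (S : LogicSpec) (A : Formula) : Set Formula := {E | WProof S (A.imp E)}

theorem genTh_theory {S : LogicSpec} (A : Formula) : IsTheory S (genTh S A) :=
  ⟨fun _ h => WProof.impK A h, fun _ _ hB h => hB.comp h, fun _ _ h1 h2 => WProof.pairR h1 h2⟩

def thms (S : LogicSpec) : Set Formula := {E | WProof S E}

theorem thms_theory (S : LogicSpec) : IsTheory S (thms S) :=
  ⟨fun _ h => h, fun _ _ hB h => h.mp hB, fun _ _ h1 h2 =>
    (WProof.mp (WProof.andI _ _) h1).mp h2⟩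

theorem primeAvoid {S : LogicSpec} {A X : Formula} (h : ¬ WProof S (A.imp X)) :
    ∃ Θ, IsPrime S Θ ∧ A ∈ Θ ∧ X ∉ Θ := by
  obtain ⟨Δ, h1, h2, h3⟩ := lindenbaum (genTh_theory A) (X := X) h
  exact ⟨Δ, h1, h2 (WProof.impId A), h3⟩

theorem primeAvoid0 {S : LogicSpec} {X : Formula} (h : ¬ WProof S X) :
    ∃ Θ, IsPrime S Θ ∧ X ∉ Θ := by
  obtain ⟨Δ, h1, -, h3⟩ := lindenbaum (thms_theory S) (X := X) h
  exact ⟨Δ, h1, h3⟩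

/-! #### Compatibility lemmas -/

theorem boxDiaCompat {S : LogicSpec} {Γ : Set Formula} (hΓ : IsPrime S Γ) {A B : Formula}
    (hb : Formula.box B ∈ Γ) (hd : Formula.dia A ∈ Γ) :
    ∃ Θ, IsPrime S Θ ∧ B ∈ Θ ∧ A ∈ Θ := by
  by_cases h : WProof S ((B.and A).imp Formula.bot)
  · exfalso
    have h1 : Formula.box A.neg ∈ Γ := hΓ.1.mem_mono hb (WProof.monBox (WProof.curry h))
    have h2 : Formula.dia A.neg.neg ∈ Γ := hΓ.1.mem_mono hd (WProof.monDia (WProof.dni A))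
    exact hΓ.2.1 (hΓ.1.mem_mono (hΓ.1.mem_conj h1 h2) (WProof.dualAnd A.neg))
  · obtain ⟨Θ, hΘ, hm, -⟩ := primeAvoid h
    exact ⟨Θ, hΘ, hΘ.1.mem_mono hm (WProof.andE1 _ _), hΘ.1.mem_mono hm (WProof.andE2 _ _)⟩

theorem diaCompat {S : LogicSpec} {Γ : Set Formula} (hΓ : IsPrime S Γ) {A X : Formula}
    (hd : Formula.dia A ∈ Γ) (hx : Formula.dia X ∉ Γ) :
    ∃ Θ, IsPrime S Θ ∧ A ∈ Θ ∧ X ∉ Θ := by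
  by_cases h : WProof S (A.imp X)
  · exact absurd (hΓ.1.mem_mono hd (WProof.monDia h)) hx
  · exact primeAvoid h

theorem kCompat {S : LogicSpec} (hC : S.hasC = true) {Γ : Set Formula} (hΓ : IsPrime S Γ)
    {A B X : Formula} (hb : Formula.box B ∈ Γ) (hd : Formula.dia A ∈ Γ)
    (hx : Formula.dia X ∉ Γ) :
    ∃ Θ, IsPrime S Θ ∧ B ∈ Θ ∧ A ∈ Θ ∧ X ∉ Θ := by
  by_cases h : WProof S ((B.and A).imp X)
  · exfalso
    have h1 : Formula.box (A.imp X) ∈ Γ := hΓ.1.mem_mono hb (WProof.monBox (WProof.curry h))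
    have h2 : (Formula.dia A).imp (Formula.dia X) ∈ Γ := hΓ.1.mem_mono h1 (WProof.kDia A X hC)
    exact hx (hΓ.1.mem_mp hd h2)
  · obtain ⟨Θ, hΘ, hm, hX⟩ := primeAvoid h
    exact ⟨Θ, hΘ, hΘ.1.mem_mono hm (WProof.andE1 _ _), hΘ.1.mem_mono hm (WProof.andE2 _ _), hX⟩

theorem diaTopMem {S : LogicSpec} (h : S.hasP = true ∨ (S.hasN = true ∧ S.hasD = true))
    {Γ : Set Formula} (hΓ : IsTheory S Γ) : Formula.dia Formula.top ∈ Γ := by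
  rcases h with h | ⟨hN, hD⟩
  · exact hΓ.mem_thm (WProof.pDia h)
  · exact hΓ.mem_mono (hΓ.mem_thm (WProof.nBox hN)) (WProof.dAx _ hD)

theorem rsetWitness {S : LogicSpec} {Γ : Set Formula} (hΓ : IsPrime S Γ)
    (htop : Formula.dia Formula.top ∈ Γ) {X : Formula} (hx : Formula.dia X ∉ Γ) :
    ∃ Θ, IsPrime S Θ ∧ X ∉ Θ := by
  apply primeAvoid0
  intro h
  exact hx (hΓ.1.mem_mono htop (WProof.monDia (WProof.impK Formula.top h)))

/-! #### The canonical model -/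

/-- Worlds of the canonical model: a prime theory together with an optional "tag"
formula used to create refutation neighbourhoods for non-derivable diamonds. -/
def Wld (S : LogicSpec) : Type := {Γ : Set Formula // IsPrime S Γ} × Option Formula

/-- The truth set of a formula. -/
def tset (S : LogicSpec) (A : Formula) : Set (Wld S) := {w | A ∈ w.1.1}

/-- The refutation set of a formula. -/
def rset (S : LogicSpec) (X : Formula) : Set (Wld S) := {w | X ∉ w.1.1}

/-- Canonical neighbourhoods. -/
def canN (S : LogicSpec) (w : Wld S) : Set (Set (Wld S)) :=
  {α | (∃ B, Formula.box B ∈ w.1.1 ∧ α = tset S B) ∨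
       (∃ X, w.2 = some X ∧ Formula.dia X ∉ w.1.1 ∧ α = rset S X) ∨
       (S.hasC = true ∧ ∃ B X, Formula.box B ∈ w.1.1 ∧ w.2 = some X ∧
          Formula.dia X ∉ w.1.1 ∧ α = tset S B ∩ rset S X)}

/-- The canonical model. -/
def canM (S : LogicSpec) : CNM (Wld S) where
  le u v := u.1.1 ⊆ v.1.1
  le_refl _ := subset_rfl
  le_trans _ _ _ h1 h2 := h1.trans h2
  N := canN S
  V p := {w | Formula.var p ∈ w.1.1}
  hered _ _ _ h hu := h hu

theorem mem_tset {S : LogicSpec} {A : Formula} {w : Wld S} : w ∈ tset S A ↔ A ∈ w.1.1 := Iff.rfl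

theorem tset_inter {S : LogicSpec} (A B : Formula) :
    tset S A ∩ tset S B = tset S (A.and B) := by
  ext w
  constructor
  · rintro ⟨h1, h2⟩; exact w.1.2.1.mem_conj h1 h2
  · intro h; exact ⟨w.1.2.1.mem_mono h (WProof.andE1 A B), w.1.2.1.mem_mono h (WProof.andE2 A B)⟩

/-! #### Truth lemma -/

theorem truth (S : LogicSpec) (A : Formula) : ∀ w : Wld S, (canM S).force A w ↔ A ∈ w.1.1 := by
  induction A with
  | var p => intro w; exact Iff.rfl
  | bot =>
    intro w
    simp only [CNM.force]
    exact ⟨False.elim, fun h => w.1.2.2.1 h⟩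
  | and A B ihA ihB =>
    intro w
    simp only [CNM.force]
    rw [ihA w, ihB w]
    constructor
    · rintro ⟨h1, h2⟩; exact w.1.2.1.mem_conj h1 h2
    · intro h
      exact ⟨w.1.2.1.mem_mono h (WProof.andE1 A B), w.1.2.1.mem_mono h (WProof.andE2 A B)⟩
  | or A B ihA ihB =>
    intro w
    simp only [CNM.force]
    rw [ihA w, ihB w]
    constructor
    · rintro (h | h)
      · exact w.1.2.1.mem_mono h (WProof.orI1 A B)
      · exact w.1.2.1.mem_mono h (WProof.orI2 A B)
    · intro h; exact w.1.2.2.2 A B h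
  | imp A B ihA ihB =>
    intro w
    simp only [CNM.force]
    constructor
    · intro h
      by_contra hnot
      have hB : B ∉ extTh S w.1.1 A := by
        rintro ⟨d, hd, hder⟩
        exact hnot (w.1.2.1.mem_mono hd (WProof.curry hder))
      obtain ⟨Δ, hΔ, hsub, hBΔ⟩ := lindenbaum (extTh_theory w.1.2.1 A) hB
      set v : Wld S := (⟨Δ, hΔ⟩, none) with hv
      have hle : (canM S).le w v := fun x hx => hsub (subset_extTh A hx)
      have hAv : (canM S).force A v := (ihA v).mpr (hsub (self_mem_extTh w.1.2.1 A))
      exact hBΔ ((ihB v).mp (h v hle hAv))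
    · intro h v hle hAv
      exact (ihB v).mpr (v.1.2.1.mem_mp ((ihA v).mp hAv) (hle h))
  | box A ihA =>
    intro w
    simp only [CNM.force]
    constructor
    · intro h
      obtain ⟨α, hαN, hα⟩ := h (w.1, none) subset_rfl
      rcases hαN with ⟨B, hB, rfl⟩ | ⟨X, hX, -, -⟩ | ⟨-, B, X, -, hX, -, -⟩
      · -- good neighbourhood
        have himp : WProof S (B.imp A) := by
          by_contra hBA
          obtain ⟨Θ, hΘ, hBΘ, hAΘ⟩ := primeAvoid hBA
          exact hAΘ ((ihA ((⟨Θ, hΘ⟩ : {Γ // IsPrime S Γ}), none)).mp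
            (hα _ hBΘ))
        exact w.1.2.1.mem_mono hB (WProof.monBox himp)
      · exact absurd hX (by simp)
      · exact absurd hX (by simp)
    · intro h v hle
      refine ⟨tset S A, Or.inl ⟨A, hle h, rfl⟩, fun u hu => (ihA u).mpr hu⟩
  | dia A ihA =>
    intro w
    simp only [CNM.force]
    constructor
    · intro h
      by_contra hnot
      set v : Wld S := (w.1, some A) with hv
      have hle : (canM S).le w v := subset_rfl
      have hαN : rset S A ∈ canN S v := Or.inr (Or.inl ⟨A, rfl, hnot, rfl⟩)
      obtain ⟨u, hu, hforce⟩ := h v hle (rset S A) hαN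
      exact hu ((ihA u).mp hforce)
    · intro h v hle α hαN
      have hdv : Formula.dia A ∈ v.1.1 := hle h
      rcases hαN with ⟨B, hB, rfl⟩ | ⟨X, -, hX, rfl⟩ | ⟨hC, B, X, hB, -, hX, rfl⟩
      · obtain ⟨Θ, hΘ, hBΘ, hAΘ⟩ := boxDiaCompat v.1.2 hB hdv
        exact ⟨((⟨Θ, hΘ⟩ : {Γ // IsPrime S Γ}), none), hBΘ,
          (ihA _).mpr hAΘ⟩
      · obtain ⟨Θ, hΘ, hAΘ, hXΘ⟩ := diaCompat v.1.2 hdv hX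
        exact ⟨((⟨Θ, hΘ⟩ : {Γ // IsPrime S Γ}), none), hXΘ, (ihA _).mpr hAΘ⟩
      · obtain ⟨Θ, hΘ, hBΘ, hAΘ, hXΘ⟩ := kCompat hC v.1.2 hB hdv hX
        exact ⟨((⟨Θ, hΘ⟩ : {Γ // IsPrime S Γ}), none), ⟨hBΘ, hXΘ⟩, (ihA _).mpr hAΘ⟩

/-! #### The canonical model satisfies the frame conditions -/

theorem canM_forLogic (S : LogicSpec)
    (hside : S.hasD = true → S.hasP = true ∨ S.hasN = true) :
    (canM S).forLogic S := by
  classical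
  have hPD : S.hasD = true → S.hasP = true ∨ (S.hasN = true ∧ S.hasD = true) := by
    intro hD; rcases hside hD with h | h
    · exact Or.inl h
    · exact Or.inr ⟨h, hD⟩
  have tagEq : ∀ {w : Wld S} {X X' : Formula}, w.2 = some X → w.2 = some X' → X = X' := by
    intro w X X' h1 h2; rw [h1] at h2; exact Option.some.inj h2
  refine ⟨?_, ?_, ?_, ?_, ?_⟩
  -- (C)
  · intro hC w α hα β hβ
    rcases hα with ⟨B, hB, rfl⟩ | ⟨X, htag, hX, rfl⟩ | ⟨-, B, X, hB, htag, hX, rfl⟩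
    · rcases hβ with ⟨B', hB', rfl⟩ | ⟨X', htag', hX', rfl⟩ | ⟨-, B', X', hB', htag', hX', rfl⟩
      · exact Or.inl ⟨B.and B', w.1.2.1.mem_conj hB hB' |> (w.1.2.1.mem_mono ·
          (WProof.cBox B B' hC)), tset_inter B B'⟩
      · exact Or.inr (Or.inr ⟨hC, B, X', hB, htag', hX', rfl⟩)
      · refine Or.inr (Or.inr ⟨hC, B.and B', X', w.1.2.1.mem_mono (w.1.2.1.mem_conj hB hB')
          (WProof.cBox B B' hC), htag', hX', ?_⟩)
        rw [← Set.inter_assoc, tset_inter]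
    · rcases hβ with ⟨B', hB', rfl⟩ | ⟨X', htag', hX', rfl⟩ | ⟨-, B', X', hB', htag', hX', rfl⟩
      · exact Or.inr (Or.inr ⟨hC, B', X, hB', htag, hX, Set.inter_comm _ _⟩)
      · obtain rfl : X = X' := tagEq htag htag'
        exact Or.inr (Or.inl ⟨X, htag, hX, Set.inter_self _⟩)
      · obtain rfl : X = X' := tagEq htag htag'
        refine Or.inr (Or.inr ⟨hC, B', X, hB', htag, hX, ?_⟩)
        ext u; simp only [Set.mem_inter_iff]; tauto
    · rcases hβ with ⟨B', hB', rfl⟩ | ⟨X', htag', hX', rfl⟩ | ⟨-, B', X', hB', htag', hX', rfl⟩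
      · refine Or.inr (Or.inr ⟨hC, B.and B', X, w.1.2.1.mem_mono (w.1.2.1.mem_conj hB hB')
          (WProof.cBox B B' hC), htag, hX, ?_⟩)
        rw [← tset_inter, Set.inter_right_comm]
      · obtain rfl : X = X' := tagEq htag htag'
        refine Or.inr (Or.inr ⟨hC, B, X, hB, htag, hX, ?_⟩)
        rw [Set.inter_assoc, Set.inter_self]
      · obtain rfl : X = X' := tagEq htag htag'
        refine Or.inr (Or.inr ⟨hC, B.and B', X, w.1.2.1.mem_mono (w.1.2.1.mem_conj hB hB')
          (WProof.cBox B B' hC), htag, hX, ?_⟩)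
        rw [← tset_inter]
        ext u; simp only [Set.mem_inter_iff]; tauto
  -- (N)
  · intro hN w
    have hmem : tset S Formula.top ∈ canN S w :=
      Or.inl ⟨Formula.top, w.1.2.1.mem_thm (WProof.nBox hN), rfl⟩
    intro hemp
    have hemp' : canN S w = ∅ := hemp
    rw [hemp'] at hmem
    exact hmem
  -- (T)
  · intro hT w α hα
    rcases hα with ⟨B, hB, rfl⟩ | ⟨X, htag, hX, rfl⟩ | ⟨-, B, X, hB, htag, hX, rfl⟩
    · exact w.1.2.1.mem_mono hB (WProof.tBox B hT)
    · exact fun hXw => hX (w.1.2.1.mem_mono hXw (WProof.tDia X hT))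
    · exact ⟨w.1.2.1.mem_mono hB (WProof.tBox B hT),
        fun hXw => hX (w.1.2.1.mem_mono hXw (WProof.tDia X hT))⟩
  -- (D)
  · intro hD w α hα β hβ
    have htop : Formula.dia Formula.top ∈ w.1.1 := diaTopMem (hPD hD) w.1.2.1
    rcases hα with ⟨B, hB, rfl⟩ | ⟨X, htag, hX, rfl⟩ | ⟨hC, B, X, hB, htag, hX, rfl⟩
    · rcases hβ with ⟨B', hB', rfl⟩ | ⟨X', htag', hX', rfl⟩ | ⟨hC', B', X', hB', htag', hX', rfl⟩
      · obtain ⟨Θ, hΘ, h1, h2⟩ := boxDiaCompat w.1.2 hB'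
          (w.1.2.1.mem_mono hB (WProof.dAx B hD))
        exact ⟨((⟨Θ, hΘ⟩ : {Γ // IsPrime S Γ}), none), h2, h1⟩
      · obtain ⟨Θ, hΘ, h1, h2⟩ := diaCompat w.1.2
          (w.1.2.1.mem_mono hB (WProof.dAx B hD)) hX'
        exact ⟨((⟨Θ, hΘ⟩ : {Γ // IsPrime S Γ}), none), h1, h2⟩
      · obtain ⟨Θ, hΘ, h1, h2, h3⟩ := kCompat hC' w.1.2 hB'
          (w.1.2.1.mem_mono hB (WProof.dAx B hD)) hX'
        exact ⟨((⟨Θ, hΘ⟩ : {Γ // IsPrime S Γ}), none), h2, h1, h3⟩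
    · rcases hβ with ⟨B', hB', rfl⟩ | ⟨X', htag', hX', rfl⟩ | ⟨hC', B', X', hB', htag', hX', rfl⟩
      · obtain ⟨Θ, hΘ, h1, h2⟩ := diaCompat w.1.2
          (w.1.2.1.mem_mono hB' (WProof.dAx B' hD)) hX
        exact ⟨((⟨Θ, hΘ⟩ : {Γ // IsPrime S Γ}), none), h2, h1⟩
      · obtain rfl : X = X' := tagEq htag htag'
        obtain ⟨Θ, hΘ, hXΘ⟩ := rsetWitness w.1.2 htop hX
        exact ⟨((⟨Θ, hΘ⟩ : {Γ // IsPrime S Γ}), none), hXΘ, hXΘ⟩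
      · obtain rfl : X = X' := tagEq htag htag'
        obtain ⟨Θ, hΘ, h1, h2⟩ := diaCompat w.1.2
          (w.1.2.1.mem_mono hB' (WProof.dAx B' hD)) hX
        exact ⟨((⟨Θ, hΘ⟩ : {Γ // IsPrime S Γ}), none), h2, h1, h2⟩
    · rcases hβ with ⟨B', hB', rfl⟩ | ⟨X', htag', hX', rfl⟩ | ⟨hC', B', X', hB', htag', hX', rfl⟩
      · obtain ⟨Θ, hΘ, h1, h2, h3⟩ := kCompat hC w.1.2 hB
          (w.1.2.1.mem_mono hB' (WProof.dAx B' hD)) hX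
        exact ⟨((⟨Θ, hΘ⟩ : {Γ // IsPrime S Γ}), none), ⟨h1, h3⟩, h2⟩
      · obtain rfl : X = X' := tagEq htag htag'
        obtain ⟨Θ, hΘ, h1, h2⟩ := diaCompat w.1.2
          (w.1.2.1.mem_mono hB (WProof.dAx B hD)) hX
        exact ⟨((⟨Θ, hΘ⟩ : {Γ // IsPrime S Γ}), none), ⟨h1, h2⟩, h2⟩
      · obtain rfl : X = X' := tagEq htag htag'
        obtain ⟨Θ, hΘ, h1, h2, h3⟩ := kCompat hC w.1.2 hB
          (w.1.2.1.mem_mono hB' (WProof.dAx B' hD)) hX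
        exact ⟨((⟨Θ, hΘ⟩ : {Γ // IsPrime S Γ}), none), ⟨h1, h3⟩, h2, h3⟩
  -- (P)
  · intro hP w hemp
    have htop : Formula.dia Formula.top ∈ w.1.1 := w.1.2.1.mem_thm (WProof.pDia hP)
    rcases hemp with ⟨B, hB, hα⟩ | ⟨X, htag, hX, hα⟩ | ⟨hC, B, X, hB, htag, hX, hα⟩
    · obtain ⟨Θ, hΘ, h1, -⟩ := boxDiaCompat w.1.2 hB htop
      have hm : ((⟨Θ, hΘ⟩ : {Γ // IsPrime S Γ}), (none : Option Formula)) ∈ tset S B := h1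
      rw [← hα] at hm
      exact hm
    · obtain ⟨Θ, hΘ, hXΘ⟩ := rsetWitness w.1.2 htop hX
      have hm : ((⟨Θ, hΘ⟩ : {Γ // IsPrime S Γ}), (none : Option Formula)) ∈ rset S X := hXΘ
      rw [← hα] at hm
      exact hm
    · obtain ⟨Θ, hΘ, h1, -, h3⟩ := kCompat hC w.1.2 hB htop hX
      have hm : ((⟨Θ, hΘ⟩ : {Γ // IsPrime S Γ}), (none : Option Formula)) ∈
          tset S B ∩ rset S X := ⟨h1, h3⟩
      rw [← hα] at hm
      exact hm

end Completeness

/-- completeness of the fourteen W-logics with respect to their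
constructive neighbourhood models: if `A` is valid in every constructive
neighbourhood model for WL, then `WL ⊢ A`. -/
theorem statement19 (L : LName) (A : Formula) :
    (∀ (W : Type) [Nonempty W] (M : CNM W),
        M.forLogic (wSpec L) → ∀ w : W, M.force A w) →
    WProof (wSpec L) A := by
  intro h
  by_contra hA
  have hside : (wSpec L).hasD = true → (wSpec L).hasP = true ∨ (wSpec L).hasN = true := by
    cases L <;> decide
  obtain ⟨Γ₀, hΓ₀, hA0⟩ := primeAvoid0 hA
  haveI : Nonempty (Wld (wSpec L)) :=
    ⟨((⟨Γ₀, hΓ₀⟩ : {Γ : Set Formula // IsPrime (wSpec L) Γ}), none)⟩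
  have hforce := h (Wld (wSpec L)) (canM (wSpec L)) (canM_forLogic (wSpec L) hside)
    ((⟨Γ₀, hΓ₀⟩ : {Γ : Set Formula // IsPrime (wSpec L) Γ}), none)
  exact hA0 ((truth (wSpec L) A _).mp hforce)
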